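/- If ε < 1/2, then the majority-vote error P(N,ε) = Σ_{k=⌊N/2⌋+1}^{N} C(N,k) ε^k (1-ε)^(N-k) of an ensemble of N independent classifiers is strictly less than ε whenever N ≥ 3 is odd (Condorcet Jury Theorem, finite form). -/

import Mathlib

/-- The majority-vote error of `N` independent classifiers each erring with probability `ε`. -/
noncomputable def majErr (N : ℕ) (ε : ℝ) : ℝ :=
  ∑ k ∈ Finset.Icc (N / 2 + 1) N, (N.choose k : ℝ) * ε ^ k * (1 - ε) ^ (N - k)

private lemma majErr_odd (n : ℕ) (ε : ℝ) :
    majErr (2 * n + 1) ε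
      = ∑ k ∈ Finset.Icc (n + 1) (2 * n + 1),
          ((2 * n + 1).choose k : ℝ) * ε ^ k * (1 - ε) ^ (2 * n + 1 - k) := by
  have h : (2 * n + 1) / 2 = n := by omega
  rw [majErr, h]

/-- Derivative of `majErr (2n+1)` via telescoping. -/
private lemma hasDerivAt_majErr (n : ℕ) (x : ℝ) :
    HasDerivAt (fun ε => majErr (2 * n + 1) ε)
      (((n : ℝ) + 1) * ((2 * n + 1).choose (n + 1) : ℝ) * (x ^ n * (1 - x) ^ n)) x := by
  set N := 2 * n + 1 with hNdef
  -- telescoping function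
  set g : ℕ → ℝ := fun k => (N.choose k : ℝ) * k * x ^ (k - 1) * (1 - x) ^ (N - k) with hg
  have key : ∀ k ∈ Finset.Icc (n + 1) N,
      HasDerivAt (fun ε : ℝ => (N.choose k : ℝ) * ε ^ k * (1 - ε) ^ (N - k))
        (g k - g (k + 1)) x := by
    intro k hk
    simp only [Finset.mem_Icc] at hk
    have h1 : HasDerivAt (fun ε : ℝ => (N.choose k : ℝ) * ε ^ k)
        ((N.choose k : ℝ) * (k * x ^ (k - 1))) x :=
      (hasDerivAt_pow k x).const_mul _
    have h2 : HasDerivAt (fun ε : ℝ => (1 - ε) ^ (N - k))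
        ((N - k : ℕ) * (1 - x) ^ (N - k - 1) * (-1)) x := by
      have := ((hasDerivAt_id x).const_sub 1).fun_pow (N - k)
      simpa using this
    have h3 := h1.fun_mul h2
    refine h3.congr_deriv (Eq.symm ?_)
    have hcast : ((N.choose (k + 1) : ℝ)) * ((k : ℝ) + 1)
        = (N.choose k : ℝ) * ((N - k : ℕ) : ℝ) := by
      have := Nat.choose_succ_right_eq N k
      exact_mod_cast congrArg (Nat.cast : ℕ → ℝ) this
    have hk1 : k + 1 - 1 = k := rfl
    have hNk : N - (k + 1) = N - k - 1 := by omega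
    simp only [hg, hk1, hNk, Nat.cast_add, Nat.cast_one]
    linear_combination (-(x ^ k * (1 - x) ^ (N - k - 1))) * hcast
  have hsum : HasDerivAt (fun ε => majErr N ε)
      (∑ k ∈ Finset.Icc (n + 1) N, (g k - g (k + 1))) x := by
    have : HasDerivAt (fun ε : ℝ => ∑ k ∈ Finset.Icc (n + 1) N,
        (N.choose k : ℝ) * ε ^ k * (1 - ε) ^ (N - k))
        (∑ k ∈ Finset.Icc (n + 1) N, (g k - g (k + 1))) x :=
      HasDerivAt.fun_sum key
    refine this.congr_of_eventuallyEq ?_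
    filter_upwards with y
    rw [majErr_odd]
  have htel : ∑ k ∈ Finset.Icc (n + 1) N, (g k - g (k + 1)) = g (n + 1) - g (N + 1) := by
    rw [← Finset.Ico_add_one_right_eq_Icc, Finset.sum_Ico_eq_sum_range]
    have hlen : N + 1 - (n + 1) = n + 1 := by omega
    rw [hlen]
    have := Finset.sum_range_sub' (fun i => g (n + 1 + i)) (n + 1)
    simpa [add_assoc, add_comm, add_left_comm, show n + 1 + (n + 1) = N + 1 by omega] using this
  have hgN : g (N + 1) = 0 := by
    simp [hg, Nat.choose_eq_zero_of_lt (by omega : N < N + 1)]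
  have hgn : g (n + 1) = ((n : ℝ) + 1) * ((2 * n + 1).choose (n + 1) : ℝ)
      * (x ^ n * (1 - x) ^ n) := by
    have h1 : n + 1 - 1 = n := rfl
    have h2 : N - (n + 1) = n := by omega
    simp only [hg, h1, h2, Nat.cast_add, Nat.cast_one]
    ring
  rw [htel, hgN, hgn, sub_zero] at hsum
  exact hsum

private lemma majErr_zero (n : ℕ) : majErr (2 * n + 1) 0 = 0 := by
  rw [majErr_odd]
  apply Finset.sum_eq_zero
  intro k hk
  simp only [Finset.mem_Icc] at hk
  have : (0 : ℝ) ^ k = 0 := zero_pow (by omega)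
  simp [this]

private lemma majErr_half (n : ℕ) : majErr (2 * n + 1) (1 / 2 : ℝ) = 1 / 2 := by
  rw [majErr_odd]
  have hterm : ∀ k ∈ Finset.Icc (n + 1) (2 * n + 1),
      ((2 * n + 1).choose k : ℝ) * (1 / 2 : ℝ) ^ k * (1 - 1 / 2 : ℝ) ^ (2 * n + 1 - k)
        = ((2 * n + 1).choose k : ℝ) * (1 / 2 : ℝ) ^ (2 * n + 1) := by
    intro k hk
    simp only [Finset.mem_Icc] at hk
    have hhalf : (1 : ℝ) - 1 / 2 = 1 / 2 := by norm_num
    rw [hhalf, mul_assoc, ← pow_add]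
    congr 2
    omega
  rw [Finset.sum_congr rfl hterm, ← Finset.sum_mul]
  have hdisj : Disjoint (Finset.range (n + 1)) (Finset.Icc (n + 1) (2 * n + 1)) := by
    rw [Finset.disjoint_left]
    intro k hk hk'
    simp only [Finset.mem_range] at hk
    simp only [Finset.mem_Icc] at hk'
    omega
  have hsplit : Finset.range (n + 1) ∪ Finset.Icc (n + 1) (2 * n + 1)
      = Finset.range (2 * n + 1 + 1) := by
    ext k
    simp only [Finset.mem_union, Finset.mem_range, Finset.mem_Icc]
    omega
  have h3 : (∑ k ∈ Finset.range (n + 1), (2 * n + 1).choose k)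
      + (∑ k ∈ Finset.Icc (n + 1) (2 * n + 1), (2 * n + 1).choose k) = 2 ^ (2 * n + 1) := by
    rw [← Finset.sum_union hdisj, hsplit]
    exact Nat.sum_range_choose (2 * n + 1)
  have h2 : ∑ k ∈ Finset.range (n + 1), (2 * n + 1).choose k = 4 ^ n :=
    Nat.sum_range_choose_halfway n
  have hpow : (2 : ℕ) ^ (2 * n + 1) = 2 * 4 ^ n := by
    rw [pow_succ, pow_mul]
    ring_nf
  have hIcc : ∑ k ∈ Finset.Icc (n + 1) (2 * n + 1), (2 * n + 1).choose k = 4 ^ n := by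
    omega
  rw [← Nat.cast_sum, hIcc]
  have h4 : (((4 ^ n : ℕ) : ℝ)) = (2 : ℝ) ^ (2 * n) := by
    push_cast
    rw [pow_mul]
    norm_num
  rw [h4]
  have h5 : (2 : ℝ) ^ (2 * n) * (1 / 2 : ℝ) ^ (2 * n) = 1 := by
    rw [← mul_pow]
    norm_num
  rw [pow_succ, ← mul_assoc, h5, one_mul]

/-- Condorcet Jury Theorem (finite form): for an odd ensemble of `N ≥ 3` independent
classifiers each with error probability `ε ∈ (0, 1/2)`, the majority-vote error is
strictly less than `ε`. -/
theorem condorcet_majority_lt (N : ℕ) (hN : Odd N) (hN3 : 3 ≤ N)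
    (ε : ℝ) (hε0 : 0 < ε) (hε : ε < 1 / 2) :
    majErr N ε < ε := by
  obtain ⟨n, rfl⟩ := hN
  have hn : 1 ≤ n := by omega
  set f : ℝ → ℝ := fun x => majErr (2 * n + 1) x - x with hf
  set c : ℝ := ((n : ℝ) + 1) * ((2 * n + 1).choose (n + 1) : ℝ) with hc
  have hcpos : 0 < c := by
    apply mul_pos
    · positivity
    · exact_mod_cast Nat.choose_pos (by omega : n + 1 ≤ 2 * n + 1)
  have hderiv : ∀ x : ℝ, HasDerivAt f (c * (x ^ n * (1 - x) ^ n) - 1) x := by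
    intro x
    exact (hasDerivAt_majErr n x).sub (hasDerivAt_id x)
  have hderiv_eq : ∀ x : ℝ, deriv f x = c * (x ^ n * (1 - x) ^ n) - 1 := fun x =>
    (hderiv x).deriv
  have hdiff : Differentiable ℝ f := fun x => (hderiv x).differentiableAt
  have hcont : ContinuousOn f (Set.Icc (0 : ℝ) (1 / 2)) := hdiff.continuous.continuousOn
  have hmono : StrictMonoOn (deriv f) (interior (Set.Icc (0 : ℝ) (1 / 2))) := by
    rw [interior_Icc]
    intro a ha b hb hab
    simp only [Set.mem_Ioo] at ha hb
    rw [hderiv_eq, hderiv_eq]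
    have h1 : a * (1 - a) < b * (1 - b) := by nlinarith
    have h2 : 0 ≤ a * (1 - a) := by nlinarith
    have h3 : (a * (1 - a)) ^ n < (b * (1 - b)) ^ n :=
      pow_lt_pow_left₀ h1 h2 (by omega)
    have h4 : a ^ n * (1 - a) ^ n < b ^ n * (1 - b) ^ n := by
      rwa [← mul_pow, ← mul_pow]
    have := mul_lt_mul_of_pos_left h4 hcpos
    linarith
  have hconv : StrictConvexOn ℝ (Set.Icc (0 : ℝ) (1 / 2)) f :=
    hmono.strictConvexOn_of_deriv (convex_Icc _ _) hcont
  have h0 : (0 : ℝ) ∈ Set.Icc (0 : ℝ) (1 / 2) := by norm_num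
  have hhalf : (1 / 2 : ℝ) ∈ Set.Icc (0 : ℝ) (1 / 2) := by norm_num
  have hab : (1 - 2 * ε) + 2 * ε = 1 := by ring
  have key := hconv.2 h0 hhalf (by norm_num) (by linarith : (0 : ℝ) < 1 - 2 * ε)
      (by linarith : (0 : ℝ) < 2 * ε) hab
  have harg : (1 - 2 * ε) • (0 : ℝ) + (2 * ε) • (1 / 2 : ℝ) = ε := by
    simp [smul_eq_mul]; ring
  rw [harg] at key
  have hf0 : f 0 = 0 := by simp [hf, majErr_zero]
  have hfh : f (1 / 2) = 0 := by
    show majErr (2 * n + 1) (1 / 2) - 1 / 2 = 0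
    rw [majErr_half]
    ring
  rw [hf0, hfh] at key
  simp only [smul_eq_mul, mul_zero, add_zero] at key
  have : f ε < 0 := key
  simp only [hf] at this
  linarith
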